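/- For real z with |z| < 27/4, ∑_{n≥1} z^n / (n · binom(3n, n)) = (2/3) · ∫_0^1 (x z) / (1 − z(1−x)x²) dx. -/

import Mathlib

/-!
Euler's beta integral gives
`1 / ((n + 1) * binom(3n + 3, n + 1)) = (2/3) ∫₀¹ x^(2n+1) (1 - x)^n dx`, and
`z^(n+1) x^(2n+1) (1 - x)^n = x z (z (1 - x) x²)^n` is the `n`-th term of a geometric series
whose ratio is bounded by `|z| · 4/27 < 1` uniformly on `[0, 1]`. Dominated convergence lets the
sum be taken inside the integral.
-/

open Nat
open scoped Interval

theorem integral_pow_mul_one_sub_pow (a b : ℕ) :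
    ∫ x in (0:ℝ)..1, x ^ a * (1 - x) ^ b = a ! * b ! / (a + b + 1)! := by
  have h := Complex.betaIntegral_eq_Gamma_mul_div (a + 1) (b + 1)
    (by norm_cast; positivity) (by norm_cast; positivity)
  have hab : (a + 1 : ℂ) + (b + 1) = ((a + b + 1 : ℕ) : ℂ) + 1 := by push_cast; ring
  rw [Complex.betaIntegral, hab, Complex.Gamma_nat_eq_factorial, Complex.Gamma_nat_eq_factorial,
    Complex.Gamma_nat_eq_factorial] at h
  simp only [add_sub_cancel_right, Complex.cpow_natCast] at h
  apply Complex.ofReal_injective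
  rw [← intervalIntegral.integral_ofReal]
  push_cast
  exact h

theorem two_mul_succ_mul_choose_three_mul (n : ℕ) :
    2 * ((n + 1) * (3 * (n + 1)).choose (n + 1) * ((2 * n + 1)! * n !)) = 3 * (3 * n + 2)! := by
  have h := Nat.choose_mul_factorial_mul_factorial (show n + 1 ≤ 3 * (n + 1) by omega)
  rw [show 3 * (n + 1) - (n + 1) = 2 * n + 1 + 1 by omega,
    show 3 * (n + 1) = 3 * n + 2 + 1 by omega, Nat.factorial_succ (2 * n + 1),
    Nat.factorial_succ (3 * n + 2), Nat.factorial_succ n] at h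
  rw [show 3 * (n + 1) = 3 * n + 2 + 1 by omega]
  apply Nat.eq_of_mul_eq_mul_left (show 0 < n + 1 by omega)
  linear_combination h

theorem inv_succ_mul_choose_three_mul (n : ℕ) :
    ((n + 1 : ℝ) * (3 * (n + 1)).choose (n + 1))⁻¹ =
      2 / 3 * ((2 * n + 1)! * n ! / (3 * n + 2)!) := by
  have h : (2 * ((n + 1) * (3 * (n + 1)).choose (n + 1) * ((2 * n + 1)! * n !)) : ℝ) =
      3 * (3 * n + 2)! := by exact_mod_cast two_mul_succ_mul_choose_three_mul n
  have hc : ((3 * (n + 1)).choose (n + 1) : ℝ) ≠ 0 := by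
    exact_mod_cast (Nat.choose_pos (by omega)).ne'
  field_simp
  linear_combination -h

theorem integral_mul_mul_one_sub_mul_sq_pow (z : ℝ) (n : ℕ) :
    ∫ x in (0:ℝ)..1, x * z * (z * ((1 - x) * x ^ 2)) ^ n =
      z ^ (n + 1) * ((2 * n + 1)! * n ! / (3 * n + 2)!) := by
  have h : ∀ x : ℝ,
      x * z * (z * ((1 - x) * x ^ 2)) ^ n = z ^ (n + 1) * (x ^ (2 * n + 1) * (1 - x) ^ n) :=
    fun x => by rw [mul_pow, mul_pow, ← pow_mul]; ring
  simp_rw [h, intervalIntegral.integral_const_mul, integral_pow_mul_one_sub_pow]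
  congr 4
  ring

section

variable {x z : ℝ}

theorem one_sub_mul_sq_le (hx : 0 ≤ x) : (1 - x) * x ^ 2 ≤ 4 / 27 := by
  nlinarith [mul_nonneg (show 0 ≤ x + 1 / 3 by linarith) (sq_nonneg (x - 2 / 3))]

theorem abs_mul_one_sub_mul_sq_le (hx₀ : 0 ≤ x) (hx₁ : x ≤ 1) :
    |z * ((1 - x) * x ^ 2)| ≤ |z| * (4 / 27) := by
  rw [abs_mul, abs_of_nonneg (mul_nonneg (sub_nonneg.2 hx₁) (sq_nonneg x))]
  exact mul_le_mul_of_nonneg_left (one_sub_mul_sq_le hx₀) (abs_nonneg z)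

theorem hasSum_integral_mul_mul_one_sub_mul_sq_pow (hz : |z| < 27 / 4) :
    HasSum (fun n : ℕ => ∫ x in (0:ℝ)..1, x * z * (z * ((1 - x) * x ^ 2)) ^ n)
      (∫ x in (0:ℝ)..1, x * z / (1 - z * (1 - x) * x ^ 2)) := by
  have hq : |z| * (4 / 27) < 1 := by linarith
  have hx : ∀ x ∈ Ι (0:ℝ) 1, 0 ≤ x ∧ x ≤ 1 := fun x hx => by
    rw [Set.uIoc_of_le zero_le_one] at hx
    exact ⟨hx.1.le, hx.2⟩
  refine intervalIntegral.hasSum_integral_of_dominated_convergence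
    (fun n _ => |z| * (|z| * (4 / 27)) ^ n) (fun n => by fun_prop) ?_ ?_ intervalIntegrable_const ?_
  · refine fun n => Filter.Eventually.of_forall fun x hxI => ?_
    obtain ⟨hx₀, hx₁⟩ := hx x hxI
    rw [norm_mul, norm_pow, norm_mul, Real.norm_eq_abs, Real.norm_eq_abs, abs_of_nonneg hx₀]
    gcongr
    · exact mul_le_of_le_one_left (abs_nonneg z) hx₁
    · exact abs_mul_one_sub_mul_sq_le hx₀ hx₁
  · exact Filter.Eventually.of_forall fun _ _ =>
      (summable_geometric_of_lt_one (by positivity) hq).mul_left _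
  · refine Filter.Eventually.of_forall fun x hxI => ?_
    obtain ⟨hx₀, hx₁⟩ := hx x hxI
    have hr := hasSum_geometric_of_abs_lt_one ((abs_mul_one_sub_mul_sq_le hx₀ hx₁).trans_lt hq)
    simpa only [div_eq_mul_inv, mul_assoc z] using hr.mul_left (x * z)

end

theorem stmt_16 (z : ℝ) (hz : |z| < 27 / 4) :
    ∑' n : ℕ, z ^ (n + 1) / ((n + 1) * (Nat.choose (3 * (n + 1)) (n + 1))) =
      (2 / 3) * ∫ x in (0:ℝ)..1, x * z / (1 - z * (1 - x) * x ^ 2) := by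
  rw [← ((hasSum_integral_mul_mul_one_sub_mul_sq_pow hz).mul_left (2 / 3)).tsum_eq]
  refine tsum_congr fun n => ?_
  rw [integral_mul_mul_one_sub_mul_sq_pow, div_eq_mul_inv, inv_succ_mul_choose_three_mul]
  ring
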